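/- Let A, B be n×n positive definite complex matrices, X an n×n complex matrix, p ∈ [0,1], and |||·||| a unitarily invariant norm on n×n complex matrices. Then |||A^{1/2} X B^{1/2}|||² ≤ |||A^p X B^{1−p}||| · |||A^{1−p} X B^p|||. -/

import Mathlib

/-!
For `w ∈ ℂ` put `F w = A ^ w * X * B ^ (1 - w)`, with `A ^ w = U diag(λᵢ ^ w) U*`. This is an
exponential polynomial in `w`, hence entire for any norm on matrices, and `F w` differs from
`F (re w)` by the unitary factors `A ^ (i im w)` and `B ^ (-i im w)`, so `‖F w‖` depends only on
`re w`. Hadamard's three-lines theorem on the strip between `re w = p` and `re w = 1 - p` then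
gives `‖F (1/2)‖ ≤ ‖F p‖ ^ (1/2) * ‖F (1 - p)‖ ^ (1/2)`.
-/

open scoped Matrix ComplexOrder

open Complex Matrix

section ThreeLines

open HadamardThreeLines

variable {E : Type*} [NormedAddCommGroup E] [NormedSpace ℂ E]

theorem norm_half_sq_le_of_norm_eq_norm_re {f : ℂ → E} (hf : Differentiable ℂ f)
    (hre : ∀ z, ‖f z‖ = ‖f z.re‖) : ‖f (1 / 2 : ℝ)‖ ^ 2 ≤ ‖f 0‖ * ‖f 1‖ := by
  have hbdd : BddAbove ((norm ∘ f) '' verticalClosedStrip 0 1) := by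
    obtain ⟨M, hM⟩ := (isCompact_Icc (a := (0 : ℝ)) (b := 1)).bddAbove_image
      (hf.continuous.comp continuous_ofReal).norm.continuousOn
    exact ⟨M, by rintro _ ⟨z, hz, rfl⟩; exact (hre z).trans_le (hM ⟨z.re, hz, rfl⟩)⟩
  have hedge (x : ℝ) (z : ℂ) (hz : z ∈ re ⁻¹' {x}) : ‖f z‖ ≤ ‖f x‖ := by
    rw [hre z, show z.re = x from hz]
  have h := norm_le_interp_of_mem_verticalClosedStrip₀₁' f
    (z := (1 / 2 : ℝ)) (by norm_num [verticalClosedStrip])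
    hf.diffContOnCl hbdd (hedge 0) (hedge 1)
  norm_num only [ofReal_re, ofReal_zero, ofReal_one] at h
  rw [← Real.sqrt_eq_rpow, ← Real.sqrt_eq_rpow, ← Real.sqrt_mul (norm_nonneg _)] at h
  calc ‖f (1 / 2 : ℝ)‖ ^ 2 ≤ √(‖f 0‖ * ‖f 1‖) ^ 2 := by gcongr
    _ = ‖f 0‖ * ‖f 1‖ := Real.sq_sqrt (by positivity)

theorem norm_midpoint_sq_le_of_norm_eq_norm_re {f : ℂ → E} (hf : Differentiable ℂ f)
    (hre : ∀ z, ‖f z‖ = ‖f z.re‖) (s t : ℝ) :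
    ‖f ((s + t) / 2 : ℝ)‖ ^ 2 ≤ ‖f s‖ * ‖f t‖ := by
  set g : ℂ → E := fun z => f (s + z * (t - s))
  have hgre (z : ℂ) : ‖g z‖ = ‖g z.re‖ := by
    simp only [g, hre (s + z * (t - s)), hre (s + z.re * (t - s))]
    congr 3
    simp
  have h := norm_half_sq_le_of_norm_eq_norm_re (f := g) (hf.comp (by fun_prop)) hgre
  simp only [g] at h
  convert h using 4 <;> push_cast <;> ring

end ThreeLines

theorem NormedSpace.Core.of_add_le_of_norm_smul {𝕜 E : Type*} [NormedField 𝕜] [AddCommGroup E]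
    [Module 𝕜 E] [Norm E] (add_le : ∀ x y : E, ‖x + y‖ ≤ ‖x‖ + ‖y‖)
    (norm_smul : ∀ (c : 𝕜) (x : E), ‖c • x‖ = ‖c‖ * ‖x‖) (pos : ∀ x : E, x ≠ 0 → 0 < ‖x‖) :
    NormedSpace.Core 𝕜 E := by
  have norm_zero : ‖(0 : E)‖ = 0 := by simpa using norm_smul 0 0
  refine ⟨⟨fun x => ?_, norm_smul, add_le⟩, fun x => ⟨fun hx => ?_, fun hx => hx ▸ norm_zero⟩⟩
  · rcases eq_or_ne x 0 with rfl | hx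
    · exact norm_zero.ge
    · exact (pos x hx).le
  · by_contra h
    exact (pos x h).ne' hx

namespace Matrix.PosDef

variable {n : Type*} [Fintype n] [DecidableEq n] {A B : Matrix n n ℂ}

noncomputable def cpow (hA : A.PosDef) (z : ℂ) : Matrix n n ℂ :=
  Unitary.conjStarAlgAut ℂ _ hA.1.eigenvectorUnitary
    (diagonal fun i => exp (z * Real.log (hA.1.eigenvalues i)))

theorem cpow_ofReal (hA : A.PosDef) (t : ℝ) : hA.cpow t = cfc (fun x : ℝ => x ^ t) A := by
  rw [hA.1.cfc_eq, IsHermitian.cfc, cpow]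
  congr 2 with i
  simp [Real.rpow_def_of_pos (hA.eigenvalues_pos i), mul_comm]

theorem cpow_add (hA : A.PosDef) (z w : ℂ) : hA.cpow (z + w) = hA.cpow z * hA.cpow w := by
  simp only [cpow, ← map_mul, diagonal_mul_diagonal, add_mul, exp_add]

theorem cpow_ofReal_mul_I_mem_unitaryGroup (hA : A.PosDef) (s : ℝ) :
    hA.cpow (s * I) ∈ unitaryGroup n ℂ := by
  refine Unitary.map_mem _ (mem_unitaryGroup_iff.mpr ?_)
  rw [star_eq_conjTranspose, diagonal_conjTranspose, diagonal_mul_diagonal, ← diagonal_one]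
  congr 1 with i
  rw [Pi.star_apply, star_def, mul_conj, normSq_eq_norm_sq, norm_exp]
  simp

theorem cpow_eq_sum (hA : A.PosDef) (z : ℂ) :
    hA.cpow z = ∑ i, exp (z * Real.log (hA.1.eigenvalues i)) •
      Unitary.conjStarAlgAut ℂ _ hA.1.eigenvectorUnitary (single i i 1) := by
  simp only [cpow, ← sum_single_eq_diagonal, map_sum, ← map_smul, smul_single, smul_eq_mul,
    mul_one]

theorem cpow_mul_mul_cpow_eq_sum (hA : A.PosDef) (hB : B.PosDef) (X : Matrix n n ℂ) (z w : ℂ) :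
    hA.cpow z * X * hB.cpow w = ∑ i, ∑ j,
      (exp (z * Real.log (hA.1.eigenvalues i)) * exp (w * Real.log (hB.1.eigenvalues j))) •
        (Unitary.conjStarAlgAut ℂ _ hA.1.eigenvectorUnitary (single i i 1) * X *
          Unitary.conjStarAlgAut ℂ _ hB.1.eigenvectorUnitary (single j j 1)) := by
  rw [cpow_eq_sum, Finset.sum_mul]
  simp_rw [smul_mul_assoc]
  rw [cpow_eq_sum, Finset.sum_mul_sum]
  simp_rw [smul_mul_smul_comm]

theorem apply_cpow_mul_mul_cpow_one_sub_eq_re (hA : A.PosDef) (hB : B.PosDef)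
    (X : Matrix n n ℂ) {N : Matrix n n ℂ → ℝ}
    (hN : ∀ U V C, U ∈ unitaryGroup n ℂ → V ∈ unitaryGroup n ℂ → N (U * C * V) = N C) (z : ℂ) :
    N (hA.cpow z * X * hB.cpow (1 - z)) = N (hA.cpow z.re * X * hB.cpow (1 - z.re)) := by
  have hfactor : hA.cpow z * X * hB.cpow (1 - z) = hA.cpow (z.im * I) *
      (hA.cpow z.re * X * hB.cpow (1 - z.re : ℝ)) * hB.cpow ((-z.im : ℝ) * I) := by
    have hz : z = z.im * I + z.re := by apply Complex.ext <;> simp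
    have hz' : 1 - z = (1 - z.re : ℝ) + (-z.im : ℝ) * I := by apply Complex.ext <;> simp
    rw [hz']
    nth_rewrite 1 [hz]
    simp only [cpow_add, mul_assoc]
  rw [hfactor, hN _ _ _ (hA.cpow_ofReal_mul_I_mem_unitaryGroup _)
    (hB.cpow_ofReal_mul_I_mem_unitaryGroup _), ofReal_sub, ofReal_one]

end Matrix.PosDef

theorem stmt_5_general {d : ℕ} (A B X : Matrix (Fin d) (Fin d) ℂ)
    (hA : A.PosDef) (hB : B.PosDef)
    (p : ℝ)
    (N : Matrix (Fin d) (Fin d) ℂ → ℝ)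
    (hN_add : ∀ C D, N (C + D) ≤ N C + N D)
    (hN_smul : ∀ (c : ℂ) C, N (c • C) = ‖c‖ * N C)
    (hN_pos : ∀ C, C ≠ 0 → 0 < N C)
    (hN_unitary : ∀ U V C, U ∈ Matrix.unitaryGroup (Fin d) ℂ →
      V ∈ Matrix.unitaryGroup (Fin d) ℂ → N (U * C * V) = N C) :
    N (cfc (fun x : ℝ => x ^ ((1 : ℝ) / 2)) A * X * cfc (fun x : ℝ => x ^ ((1 : ℝ) / 2)) B) ^ 2 ≤
      N (cfc (fun x : ℝ => x ^ p) A * X * cfc (fun x : ℝ => x ^ (1 - p)) B) *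
        N (cfc (fun x : ℝ => x ^ (1 - p)) A * X * cfc (fun x : ℝ => x ^ p) B) := by
  let : Norm (Matrix (Fin d) (Fin d) ℂ) := ⟨N⟩
  have core := NormedSpace.Core.of_add_le_of_norm_smul (𝕜 := ℂ) hN_add hN_smul hN_pos
  let := NormedAddCommGroup.ofCore core
  let := NormedSpace.ofCore core
  set F : ℂ → Matrix (Fin d) (Fin d) ℂ := fun w => hA.cpow w * X * hB.cpow (1 - w)
  have hF_eq_sum (w : ℂ) := hA.cpow_mul_mul_cpow_eq_sum hB X w (1 - w)
  -- `Differentiable ℂ F` written here would use the product topology of `Matrix`, not that of `N`.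
  have key := norm_midpoint_sq_le_of_norm_eq_norm_re (f := F)
    (by simp only [F, hF_eq_sum]; fun_prop)
    (hA.apply_cpow_mul_mul_cpow_one_sub_eq_re hB X hN_unitary) p (1 - p)
  simp only [F, ← ofReal_one, ← ofReal_sub, Matrix.PosDef.cpow_ofReal] at key
  rwa [add_sub_cancel, sub_sub_cancel, show (1 : ℝ) - 1 / 2 = 1 / 2 by norm_num] at key

/-- **Inequality (3.2).** For positive definite `n × n` complex matrices `A, B`, any `n × n`
matrix `X`, `p ∈ [0,1]`, and any unitarily invariant norm `N`:
`N(A^{1/2} X B^{1/2})² ≤ N(A^p X B^{1-p}) * N(A^{1-p} X B^p)`. -/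
theorem stmt_5 {d : ℕ} (A B X : Matrix (Fin d) (Fin d) ℂ)
    (hA : A.PosDef) (hB : B.PosDef)
    (p : ℝ) (hp0 : 0 ≤ p) (hp1 : p ≤ 1)
    (N : Matrix (Fin d) (Fin d) ℂ → ℝ)
    (hN_add : ∀ C D, N (C + D) ≤ N C + N D)
    (hN_smul : ∀ (c : ℂ) C, N (c • C) = ‖c‖ * N C)
    (hN_pos : ∀ C, C ≠ 0 → 0 < N C)
    (hN_unitary : ∀ U V C, U ∈ Matrix.unitaryGroup (Fin d) ℂ →
      V ∈ Matrix.unitaryGroup (Fin d) ℂ → N (U * C * V) = N C) :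
    N (cfc (fun x : ℝ => x ^ ((1 : ℝ) / 2)) A * X * cfc (fun x : ℝ => x ^ ((1 : ℝ) / 2)) B) ^ 2 ≤
      N (cfc (fun x : ℝ => x ^ p) A * X * cfc (fun x : ℝ => x ^ (1 - p)) B) *
        N (cfc (fun x : ℝ => x ^ (1 - p)) A * X * cfc (fun x : ℝ => x ^ p) B) :=
  stmt_5_general A B X hA hB p N hN_add hN_smul hN_pos hN_unitary
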